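/- arXiv:1902.09185 — 2 statements merged into one kernel-verified Lean document; each statement's English description precedes it below -/
import Mathlib

section
/- Let A be an artin algebra with id A = m+1 and a minimal injective coresolution 0 → A → I⁰ → ⋯ → I^{m+1} → 0. Then every indecomposable direct summand I' of I^{m+1} has projective dimension at least m+1. -/
open CategoryTheory TensorProduct

universe u

/-- The `k`-th Ext group of the `A`-modules `X` and `Y`. -/
noncomputable def ExtGrp (A : Type u) [Ring A] (k : ℕ)
    (X Y : Type u) [AddCommGroup X] [Module A X] [AddCommGroup Y] [Module A Y] : Type u :=
  ((Ext ℤ (ModuleCat.{u} A) k).obj (Opposite.op (ModuleCat.of A X))).obj (ModuleCat.of A Y)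

noncomputable instance (A : Type u) [Ring A] (k : ℕ)
    (X Y : Type u) [AddCommGroup X] [Module A X] [AddCommGroup Y] [Module A Y] :
    AddCommGroup (ExtGrp A k X Y) := by
  unfold ExtGrp; infer_instance

/-- `Ext_A^k(X, Y) = 0`. -/
def ExtZero (A : Type u) [Ring A] (k : ℕ)
    (X Y : Type u) [AddCommGroup X] [Module A X] [AddCommGroup Y] [Module A Y] : Prop :=
  Subsingleton (ExtGrp A k X Y)

/-- `pd X ≤ n`: `Ext^k(X, -)` vanishes for all `k > n`. -/
def ProjDimLE (A : Type u) [Ring A] (X : Type u) [AddCommGroup X] [Module A X] (n : ℕ) : Prop :=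
  ∀ k : ℕ, n < k → ∀ Y : ModuleCat.{u} A, ExtZero A k X Y

/-- The projective dimension of `X`, the length of a shortest projective resolution,
as an element of `ℕ∞` (`⊤` if infinite). -/
noncomputable def projDim (A : Type u) [Ring A] (X : Type u) [AddCommGroup X] [Module A X] : ℕ∞ :=
  sInf ((fun n : ℕ => (n : ℕ∞)) '' {n : ℕ | ProjDimLE A X n})

/-- `id Y ≤ n`: `Ext^k(-, Y)` vanishes for all `k > n`. -/
def InjDimLE (A : Type u) [Ring A] (Y : Type u) [AddCommGroup Y] [Module A Y] (n : ℕ) : Prop :=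
  ∀ k : ℕ, n < k → ∀ X : ModuleCat.{u} A, ExtZero A k X Y

/-- The injective dimension of `Y`, as an element of `ℕ∞` (`⊤` if infinite). -/
noncomputable def injDim (A : Type u) [Ring A] (Y : Type u) [AddCommGroup Y] [Module A Y] : ℕ∞ :=
  sInf ((fun n : ℕ => (n : ℕ∞)) '' {n : ℕ | InjDimLE A Y n})

/-- `X ∈ add Q`: `X` is a direct summand of a finite direct sum of copies of `Q`. -/
def InAdd (A : Type u) [Ring A] (Q : Type u) [AddCommGroup Q] [Module A Q]
    (X : Type u) [AddCommGroup X] [Module A X] : Prop :=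
  ∃ (n : ℕ) (Y : ModuleCat.{u} A), Nonempty ((X × Y) ≃ₗ[A] (Fin n → Q))

/-- `f : M → I` is an injective hull: `I` is an injective module and `f` is an essential
monomorphism. -/
def IsInjHull (A : Type u) [Ring A] {M I : Type u} [AddCommGroup M] [Module A M]
    [AddCommGroup I] [Module A I] (f : M →ₗ[A] I) : Prop :=
  Module.Injective A I ∧ Function.Injective f ∧
    ∀ N : Submodule A I, N ≠ ⊥ → N ⊓ LinearMap.range f ≠ ⊥

/-- An `A`-module is indecomposable: nonzero, and any direct sum decomposition has a
trivial factor. -/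
def Indecomp (A : Type u) [Ring A] (X : Type u) [AddCommGroup X] [Module A X] : Prop :=
  ¬ Subsingleton X ∧
    ∀ Y Z : ModuleCat.{u} A, Nonempty (X ≃ₗ[A] (Y × Z)) → Subsingleton Y ∨ Subsingleton Z

/-!
If `pd I' ≤ m`, then `Ext^{m+1}(I', -) = 0`. Shifting dimension along the short exact sequences
`0 → K_j → I^j → K_{j+1} → 0`, whose middle terms are injective, gives `Ext^1(I', K_m) = 0`.
So the embedding `I' ↪ I^{m+1} ≅ K_{m+1}` lifts to a map `I' → I^m` whose image meets `K_m`
trivially; as `K_m ⊆ I^m` is essential, `I' = 0`.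
-/

open CategoryTheory.Limits

namespace CategoryTheory.ShortComplex

variable {C : Type*} [Category C] [Abelian C]

/-- `Hom(T, Y)` is exact in the middle. For `T = P_{k+2} → P_{k+1} → P_k` taken from a projective
resolution `P` of `M`, this says `Ext^{k+1}(M, Y) = 0`. -/
def HomToExact (T : ShortComplex C) (Y : C) : Prop :=
  ∀ u : T.X₂ ⟶ Y, T.f ≫ u = 0 → ∃ s : T.X₃ ⟶ Y, T.g ≫ s = u

lemma Exact.homToExact_of_injective {T : ShortComplex C} (hT : T.Exact) (Y : C) [Injective Y] :
    T.HomToExact Y :=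
  fun u hu => ⟨hT.descToInjective u hu, hT.comp_descToInjective u hu⟩

lemma HomToExact.exists_lift_of_shortExact {T S : ShortComplex C} [Projective T.X₃]
    (hS : S.ShortExact) (hT : T.HomToExact S.X₁) (u : T.X₃ ⟶ S.X₃) (hu : T.g ≫ u = 0) :
    ∃ v : T.X₃ ⟶ S.X₂, T.g ≫ v = 0 ∧ v ≫ S.g = u := by
  have := hS.mono_f
  have := hS.epi_g
  set v₀ := Projective.factorThru u S.g
  have hv₀ : v₀ ≫ S.g = u := Projective.factorThru_comp u S.g
  set w := hS.exact.lift (T.g ≫ v₀) (by rw [Category.assoc, hv₀, hu])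
  have hw : w ≫ S.f = T.g ≫ v₀ := hS.exact.lift_f _ _
  obtain ⟨s, hs⟩ := hT w (by
    rw [← cancel_mono S.f, Category.assoc, hw, T.zero_assoc, zero_comp, zero_comp])
  refine ⟨v₀ - s ≫ S.f, ?_, ?_⟩
  · rw [Preadditive.comp_sub, ← Category.assoc, hs, hw, sub_self]
  · rw [Preadditive.sub_comp, Category.assoc, S.zero, comp_zero, sub_zero, hv₀]

end CategoryTheory.ShortComplex

namespace HomologicalComplex

variable {C : Type*} [Category C] [Abelian C] {ι : Type*} {c : ComplexShape ι}

lemma homToExact_sc'_of_shortExact (K : HomologicalComplex C c) (i j k l : ι)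
    [Projective (K.X k)] {S : ShortComplex C} (hS : S.ShortExact)
    (h₁ : (K.sc' i j k).HomToExact S.X₁) (h₂ : (K.sc' j k l).HomToExact S.X₂) :
    (K.sc' j k l).HomToExact S.X₃ := by
  intro u hu
  have : Projective (K.sc' i j k).X₃ := ‹Projective (K.X k)›
  obtain ⟨v, hv, rfl⟩ := h₁.exists_lift_of_shortExact hS u hu
  obtain ⟨t, rfl⟩ := h₂ v hv
  exact ⟨t ≫ S.g, (Category.assoc _ _ _).symm⟩

end HomologicalComplex

namespace CategoryTheory.ProjectiveResolution

variable {C : Type*} [Category C] [Abelian C] {M : C} (P : ProjectiveResolution M)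

lemma exists_lift_of_homToExact {S : ShortComplex C} (hS : S.ShortExact)
    (h : (P.complex.sc' 2 1 0).HomToExact S.X₁) (φ : M ⟶ S.X₃) :
    ∃ ψ : M ⟶ S.X₂, ψ ≫ S.g = φ := by
  have : Projective (P.complex.sc' 2 1 0).X₃ := P.projective 0
  obtain ⟨v, hv, hvg⟩ : ∃ v : P.complex.X 0 ⟶ S.X₂, P.complex.d 1 0 ≫ v = 0 ∧
      v ≫ S.g = P.π.f 0 ≫ φ :=
    h.exists_lift_of_shortExact hS (P.π.f 0 ≫ φ) (P.complex_d_comp_π_f_zero_assoc φ ▸ zero_comp)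
  refine ⟨P.exact₀.desc v hv, (cancel_epi (P.π.f 0)).1 ?_⟩
  exact (P.exact₀.g_desc_assoc v hv S.g).trans hvg

lemma homToExact_of_subsingleton_ext {R : Type*} [Ring R] [Linear R C] [EnoughProjectives C]
    (k : ℕ) (Y : C) (h : Subsingleton (((Ext R C (k + 1)).obj (Opposite.op M)).obj Y)) :
    (P.complex.sc' (k + 2) (k + 1) k).HomToExact Y := by
  have hzero : IsZero ((P.complex.linearYonedaObj R Y).homology (k + 1)) :=
    (ModuleCat.isZero_of_subsingleton _).of_iso (P.isoExt (k + 1) Y).symm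
  have hexact := ((P.complex.linearYonedaObj R Y).exactAt_iff_isZero_homology (k + 1)).2 hzero
  rw [HomologicalComplex.exactAt_iff' _ k (k + 1) (k + 2) (by simp) (by simp),
    ShortComplex.moduleCat_exact_iff] at hexact
  exact hexact

end CategoryTheory.ProjectiveResolution

section Modules

variable {A : Type u} [Ring A]

lemma natCast_le_projDim {X : Type u} [AddCommGroup X] [Module A X] (n : ℕ)
    (h : ¬ ∀ Y : ModuleCat.{u} A, ExtZero A n X Y) : (n : ℕ∞) ≤ projDim A X := by
  refine le_sInf ?_
  rintro _ ⟨k, hk, rfl⟩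
  by_contra hlt
  exact h (hk n (Nat.cast_lt.1 (not_le.1 hlt)))

lemma IsInjHull.subsingleton_of_injective_comp {K I : Type u} {L N : Type*}
    [AddCommGroup K] [Module A K] [AddCommGroup I] [Module A I] [AddCommGroup L] [Module A L]
    [AddCommGroup N] [Module A N] {f : K →ₗ[A] I} {g : I →ₗ[A] L} (hf : IsInjHull A f)
    (hfg : Function.Exact f g) (h : N →ₗ[A] I) (hgh : Function.Injective (g ∘ₗ h)) :
    Subsingleton N := by
  by_contra hN
  have := not_subsingleton_iff_nontrivial.1 hN
  obtain ⟨x, hx⟩ := exists_ne (0 : N)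
  refine hf.2.2 (LinearMap.range h) ?_ ?_
  · exact (Submodule.ne_bot_iff _).2 ⟨h x, ⟨x, rfl⟩, fun h0 => hx (hgh (by simp [h0]))⟩
  · rw [Submodule.eq_bot_iff]
    rintro _ ⟨⟨y, rfl⟩, ⟨z, hz⟩⟩
    have hy : (g ∘ₗ h) y = (g ∘ₗ h) 0 := by
      simp [← hz, hfg.apply_apply_eq_zero z]
    rw [hgh hy, map_zero]

lemma homToExact_cosyzygy_of_extZero {M : ModuleCat.{u} A} (P : ProjectiveResolution M) (m : ℕ)
    (K : Fin (m + 3) → ModuleCat.{u} A) (Is : Fin (m + 2) → ModuleCat.{u} A)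
    (f : ∀ i : Fin (m + 2), ↥(K i.castSucc) →ₗ[A] ↥(Is i))
    (g : ∀ i : Fin (m + 2), ↥(Is i) →ₗ[A] ↥(K i.succ))
    (hf : ∀ i, Function.Injective (f i)) (hIs : ∀ i, Module.Injective A (Is i))
    (hg : ∀ i, Function.Surjective (g i)) (hfg : ∀ i, Function.Exact (f i) (g i))
    (hvan : ∀ Y : ModuleCat.{u} A, ExtZero A (m + 1) M Y) (n j : ℕ) (hnj : n + j = m) :
    (P.complex.sc' (n + 2) (n + 1) n).HomToExact (K ⟨j, by omega⟩) := by
  induction j generalizing n with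
  | zero =>
    obtain rfl : n = m := hnj
    exact P.homToExact_of_subsingleton_ext n _ (hvan _)
  | succ j ih =>
    let i : Fin (m + 2) := ⟨j, by omega⟩
    have hS := ModuleCat.shortComplex_shortExact
      (ModuleCat.shortComplexOfCompEqZero (f i) (g i) (hfg i).linearMap_comp_eq_zero)
      (hfg i) (hf i) (hg i)
    have := Module.injective_object_of_injective_module (R := A) (Is i)
    exact P.complex.homToExact_sc'_of_shortExact (n + 3) (n + 2) (n + 1) n hS
      (ih (n + 1) (by omega)) ((P.exact_succ n).homToExact_of_injective _)

end Modules

theorem stmt11_general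
    (A : Type u) [Ring A]
    (m : ℕ)
    (K : Fin (m + 3) → ModuleCat.{u} A) (Is : Fin (m + 2) → ModuleCat.{u} A)
    (f : ∀ i : Fin (m + 2), ↥(K i.castSucc) →ₗ[A] ↥(Is i))
    (g : ∀ i : Fin (m + 2), ↥(Is i) →ₗ[A] ↥(K i.succ))
    (hKlast : Subsingleton (K (Fin.last (m + 2))))
    (hhull : ∀ i, IsInjHull A (f i))
    (hepi : ∀ i, Function.Surjective (g i))
    (hexact : ∀ i, Function.Exact (f i) (g i)) :
    ∀ I' : ModuleCat.{u} A, Indecomp A I' →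
      (∃ C : ModuleCat.{u} A, Nonempty ((↥I' × ↥C) ≃ₗ[A] ↥(Is (Fin.last (m + 1))))) →
      ((m : ℕ∞) + 1) ≤ projDim A I' := by
  rintro I' ⟨hI', -⟩ ⟨C, ⟨e⟩⟩
  let top : K (Fin.last (m + 1)).castSucc ≃ₗ[A] Is (Fin.last (m + 1)) :=
    .ofBijective _ ⟨(hhull _).2.1, fun y => (hexact _ y).1 (hKlast.elim _ _)⟩
  let φ : I' →ₗ[A] K (Fin.last (m + 1)).castSucc :=
    top.symm.toLinearMap ∘ₗ e.toLinearMap ∘ₗ LinearMap.inl A I' C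
  have hφ : Function.Injective φ :=
    top.symm.injective.comp (e.injective.comp LinearMap.inl_injective)
  suffices ¬ ∀ Y : ModuleCat.{u} A, ExtZero A (m + 1) I' Y by
    exact_mod_cast natCast_le_projDim (m + 1) this
  intro hvan
  apply hI'
  let i : Fin (m + 2) := ⟨m, by omega⟩
  obtain ⟨P⟩ := HasProjectiveResolution.out (Z := I')
  have hS := ModuleCat.shortComplex_shortExact
    (ModuleCat.shortComplexOfCompEqZero (f i) (g i) (hexact i).linearMap_comp_eq_zero)
    (hexact i) (hhull i).2.1 (hepi i)
  obtain ⟨ψ, hψ⟩ := P.exists_lift_of_homToExact hS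
    (homToExact_cosyzygy_of_extZero P m K Is f g (fun i => (hhull i).2.1) (fun i => (hhull i).1) hepi hexact
      hvan 0 m (zero_add m))
    (ModuleCat.ofHom φ)
  refine (hhull i).subsingleton_of_injective_comp (hexact i) ψ.hom ?_
  rwa [show g i ∘ₗ ψ.hom = φ from congrArg ModuleCat.Hom.hom hψ]

/-- Let `A` be an artin algebra with `id A = m + 1` and minimal injective
coresolution `0 → A → I⁰ → ⋯ → I^{m+1} → 0` (encoded by short exact sequences
`0 → K_i → I^i → K_{i+1} → 0` with each `K_i → I^i` an injective hull, `K 0 ≅ A` and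
`K_{m+2} = 0`). Then every indecomposable direct summand `I'` of `I^{m+1}` satisfies
`pd I' ≥ m + 1`. -/
theorem stmt11 (R₀ : Type u) [CommRing R₀] [IsArtinianRing R₀]
    (A : Type u) [Ring A] [Algebra R₀ A] [Module.Finite R₀ A]
    (m : ℕ) (hid : injDim A A = ((m : ℕ∞) + 1))
    (K : Fin (m + 3) → ModuleCat.{u} A) (Is : Fin (m + 2) → ModuleCat.{u} A)
    (f : ∀ i : Fin (m + 2), ↥(K i.castSucc) →ₗ[A] ↥(Is i))
    (g : ∀ i : Fin (m + 2), ↥(Is i) →ₗ[A] ↥(K i.succ))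
    (hK0 : Nonempty (A ≃ₗ[A] K 0)) (hKlast : Subsingleton (K (Fin.last (m + 2))))
    (hhull : ∀ i, IsInjHull A (f i))
    (hepi : ∀ i, Function.Surjective (g i))
    (hexact : ∀ i, Function.Exact (f i) (g i)) :
    ∀ I' : ModuleCat.{u} A, Indecomp A I' →
      (∃ C : ModuleCat.{u} A, Nonempty ((↥I' × ↥C) ≃ₗ[A] ↥(Is (Fin.last (m + 1))))) →
      ((m : ℕ∞) + 1) ≤ projDim A I' :=
  stmt11_general A m K Is f g hKlast hhull hepi hexact
end

section
/- Let A and B be finite dimensional algebras over a field k with B self-injective, and let I be an injective right A-module. Then I ⊗_k B is an injective right (A ⊗_k B)-module. Moreover, if I is an injective hull of an A-module M, then I ⊗_k B is an injective hull of M ⊗_k B as an (A ⊗_k B)-module. -/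
open CategoryTheory TensorProduct

universe u

/-- The scalar multiplication of an explicitly given (possibly non-instance) module
structure. -/
def moduleSMul {R M : Type u} [Semiring R] [AddCommMonoid M] (inst : Module R M)
    (r : R) (m : M) : M :=
  @HSMul.hSMul R M M (@instHSMul R M inst.toDistribMulAction.toMulAction.toSMul) r m

/-!
Restriction of scalars along `A → A ⊗ B` has the right adjoint `J ↦ Hom_k(B, J)`, so this
coinduced module is injective over `A ⊗ B` whenever `J` is an injective `A`-module. Right
multiplication embeds `B` into `Hom_k(B, B)` as `B`-modules; since `B` is self-injective it is
a direct summand there, so `I ⊗ B` is a direct summand of `I ⊗ Hom_k(B, B) ≅ Hom_k(B, I ⊗ B)`,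
which is injective because `I ⊗ B ≅ Iⁿ` is an injective `A`-module.

For the hull, `Mⁿ ⊆ Iⁿ` is again essential, so every nonzero `z ∈ I ⊗ B` has some `a ∈ A` with
`a • z` nonzero and in `M ⊗ B`; and `a • z = (a ⊗ 1) • z` stays in any `A ⊗ B`-submodule
containing `z`.
-/

theorem Module.Injective.of_retraction {R : Type*} [Ring R] {M Q : Type u} [AddCommGroup M]
    [Module R M] [AddCommGroup Q] [Module R Q] [Module.Injective R Q]
    (s : M →ₗ[R] Q) (r : Q →ₗ[R] M) (hrs : ∀ m, r (s m) = m) : Module.Injective R M where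
  out _ _ _ _ _ _ f hf g := by
    obtain ⟨h, hh⟩ := Module.Injective.out f hf (s ∘ₗ g)
    exact ⟨r ∘ₗ h, fun x ↦ by simp [hh, hrs]⟩

section BasisRight

variable {k A I V ι : Type*} [CommRing k] [Ring A] [Algebra k A]
  [AddCommGroup I] [Module k I] [Module A I] [IsScalarTower k A I]
  [AddCommGroup V] [Module k V] [Finite ι] [DecidableEq ι]

variable (A I) in
noncomputable def TensorProduct.equivPiOfBasisRight (b : Module.Basis ι k V) :
    I ⊗[k] V ≃ₗ[A] (ι → I) :=
  (AlgebraTensorModule.congr (LinearEquiv.refl A I) b.repr).trans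
    ((finsuppScalarRight k A I ι).trans (Finsupp.linearEquivFunOnFinite A I ι))

@[simp]
theorem TensorProduct.equivPiOfBasisRight_tmul (b : Module.Basis ι k V) (x : I) (v : V) (i : ι) :
    equivPiOfBasisRight A I b (x ⊗ₜ v) i = b.repr v i • x := by
  simp [equivPiOfBasisRight]

theorem TensorProduct.equivPiOfBasisRight_rTensor {M : Type*} [AddCommGroup M] [Module k M]
    [Module A M] [IsScalarTower k A M] (b : Module.Basis ι k V) (f : M →ₗ[A] I)
    (z : M ⊗[k] V) (i : ι) :
    equivPiOfBasisRight A I b ((f.restrictScalars k).rTensor V z) i =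
      f (equivPiOfBasisRight A M b z i) := by
  induction z with
  | zero => simp
  | tmul x v => simp
  | add z z' hz hz' => simp_all

end BasisRight

theorem Module.Injective.tensorProduct_of_finiteDimensional {k : Type*} {A I V : Type u}
    [Field k] [Ring A] [Algebra k A] [AddCommGroup I] [Module k I] [Module A I]
    [IsScalarTower k A I] [Module.Injective A I] [AddCommGroup V] [Module k V]
    [FiniteDimensional k V] :
    Module.Injective A (I ⊗[k] V) :=
  let e := TensorProduct.equivPiOfBasisRight A I (Module.finBasis k V)
  .of_retraction e.toLinearMap e.symm.toLinearMap e.symm_apply_apply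

section Essential

variable {A I : Type*} [Ring A] [AddCommGroup I] [Module A I] {L : Submodule A I}

theorem exists_smul_ne_zero_mem_of_essential (hL : ∀ N : Submodule A I, N ≠ ⊥ → N ⊓ L ≠ ⊥)
    {x : I} (hx : x ≠ 0) : ∃ a : A, a • x ≠ 0 ∧ a • x ∈ L := by
  obtain ⟨y, hy, hy0⟩ := (Submodule.ne_bot_iff _).mp (hL (A ∙ x) (by simpa using hx))
  obtain ⟨hyx, hyL⟩ := Submodule.mem_inf.mp hy
  obtain ⟨a, rfl⟩ := Submodule.mem_span_singleton.mp hyx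
  exact ⟨a, hy0, hyL⟩

theorem exists_smul_ne_zero_forall_mem_of_essential {ι : Type*} [Finite ι]
    (hL : ∀ N : Submodule A I, N ≠ ⊥ → N ⊓ L ≠ ⊥) {z : ι → I} (hz : z ≠ 0) :
    ∃ a : A, a • z ≠ 0 ∧ ∀ i, a • z i ∈ L := by
  classical
  cases nonempty_fintype ι
  suffices ∀ s : Finset ι, ∃ a : A, a • z ≠ 0 ∧ ∀ i ∈ s, a • z i ∈ L by
    simpa using this Finset.univ
  intro s
  induction s using Finset.induction_on with
  | empty => exact ⟨1, by simpa using hz, by simp⟩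
  | insert j s _ ih =>
    obtain ⟨a, ha, has⟩ := ih
    by_cases hj : a • z j = 0
    · exact ⟨a, ha, by simpa [hj] using has⟩
    obtain ⟨c, hc, hcL⟩ := exists_smul_ne_zero_mem_of_essential hL hj
    refine ⟨c * a, fun h ↦ hc (by simpa [mul_smul] using congr_fun h j), ?_⟩
    rintro i hi
    rcases Finset.mem_insert.mp hi with rfl | hi
    · simpa [mul_smul] using hcL
    · simpa [mul_smul] using L.smul_mem c (has i hi)

end Essential

section TensorLinear

variable {k A B : Type*} [CommRing k] [Ring A] [Ring B] [Algebra k A] [Algebra k B]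
  {M N : Type*} [AddCommGroup M] [AddCommGroup N] [Module (A ⊗[k] B) M] [Module (A ⊗[k] B) N]

theorem AddMonoidHom.map_smul_of_tmul (F : M →+ N)
    (hF : ∀ (a : A) (b : B) (m : M), F ((a ⊗ₜ[k] b) • m) = (a ⊗ₜ[k] b) • F m)
    (s : A ⊗[k] B) (m : M) : F (s • m) = s • F m := by
  induction s with
  | zero => simp
  | tmul a b => exact hF a b m
  | add s t hs ht => simp [add_smul, hs, ht]

def AddMonoidHom.toLinearMapOfTmul (F : M →+ N)
    (hF : ∀ (a : A) (b : B) (m : M), F ((a ⊗ₜ[k] b) • m) = (a ⊗ₜ[k] b) • F m) :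
    M →ₗ[A ⊗[k] B] N :=
  { F with map_smul' := F.map_smul_of_tmul hF }

end TensorLinear

section RestrictLeft

variable (k A B : Type*) [CommRing k] [Ring A] [Ring B] [Algebra k A] [Algebra k B]

theorem Algebra.TensorProduct.tmul_one_mul_eq_smul (a : A) (s : A ⊗[k] B) :
    (a ⊗ₜ[k] (1 : B)) * s = a • s := by
  induction s with
  | zero => simp
  | tmul a' b => simp [TensorProduct.smul_tmul']
  | add s t hs ht => simp [mul_add, hs, ht]

variable (X : Type*) [AddCommGroup X] [Module (A ⊗[k] B) X]

abbrev restrictLeft : Module A X :=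
  Module.compHom X (Algebra.TensorProduct.includeLeftRingHom : A →+* A ⊗[k] B)

theorem isScalarTower_restrictLeft :
    let _ := restrictLeft k A B X
    IsScalarTower A (A ⊗[k] B) X :=
  letI := restrictLeft k A B X
  ⟨fun a s x ↦ by
    change (a • s) • x = (a ⊗ₜ[k] (1 : B)) • s • x
    rw [← mul_smul, Algebra.TensorProduct.tmul_one_mul_eq_smul]⟩

end RestrictLeft

/-- The module coinduced from `J` along `A → A ⊗[k] B`. -/
def Coind (k : Type*) (B J : Type u) [CommRing k] [Ring B] [Algebra k B] [AddCommGroup J]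
    [Module k J] :=
  B →ₗ[k] J

namespace Coind

section Basic

variable {k : Type*} {B J : Type u} [CommRing k] [Ring B] [Algebra k B] [AddCommGroup J]
  [Module k J]

instance : AddCommGroup (Coind k B J) := inferInstanceAs (AddCommGroup (B →ₗ[k] J))

instance {A : Type*} [Ring A] [Algebra k A] [Module A J] [IsScalarTower k A J] :
    Module A (Coind k B J) :=
  inferInstanceAs (Module A (B →ₗ[k] J))

instance : FunLike (Coind k B J) B J := inferInstanceAs (FunLike (B →ₗ[k] J) B J)

instance : LinearMapClass (Coind k B J) k B J :=
  inferInstanceAs (LinearMapClass (B →ₗ[k] J) k B J)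

@[ext]
theorem ext {φ ψ : Coind k B J} (h : ∀ w, φ w = ψ w) : φ = ψ := LinearMap.ext h

def ofLinearMap : (B →ₗ[k] J) ≃ₗ[k] Coind k B J := LinearEquiv.refl k (B →ₗ[k] J)

@[simp]
theorem ofLinearMap_apply (φ : B →ₗ[k] J) (w : B) : ofLinearMap φ w = φ w := rfl

@[simp]
theorem ofLinearMap_symm_apply (φ : Coind k B J) (w : B) : ofLinearMap.symm φ w = φ w := rfl

@[simp]
theorem add_apply (φ ψ : Coind k B J) (w : B) : (φ + ψ) w = φ w + ψ w := rfl

@[simp]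
theorem zero_apply (w : B) : (0 : Coind k B J) w = 0 := rfl

@[simp]
theorem smul_apply_left {A : Type*} [Ring A] [Algebra k A] [Module A J] [IsScalarTower k A J]
    (a : A) (φ : Coind k B J) (w : B) : (a • φ) w = a • φ w := rfl

instance : SMul B (Coind k B J) where
  smul b φ :=
    { toFun w := φ (w * b)
      map_add' w w' := by simp [add_mul]
      map_smul' c w := by simp }

@[simp]
theorem smul_apply_right (b : B) (φ : Coind k B J) (w : B) : (b • φ) w = φ (w * b) := rfl

instance : Module B (Coind k B J) where
  one_smul φ := by ext; simp
  mul_smul b b' φ := by ext; simp [mul_assoc]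
  smul_zero b := by ext; simp
  smul_add b φ ψ := by ext; simp
  add_smul b b' φ := by ext; simp [mul_add]
  zero_smul φ := by ext; simp

instance : IsScalarTower k B (Coind k B J) where
  smul_assoc c b φ := ext fun w ↦ by simp [map_smul]

end Basic

variable {k : Type*} {A B J : Type u} [CommRing k] [Ring A] [Ring B] [Algebra k A] [Algebra k B]
  [AddCommGroup J] [Module k J] [Module A J] [IsScalarTower k A J]

instance : IsScalarTower k A (Coind k B J) where
  smul_assoc c a φ := ext fun w ↦ by simp

instance : SMulCommClass A B (Coind k B J) where
  smul_comm _ _ _ := rfl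

instance : Module (A ⊗[k] B) (Coind k B J) := TensorProduct.Algebra.module

@[simp]
theorem tmul_smul_apply (a : A) (b : B) (φ : Coind k B J) (w : B) :
    ((a ⊗ₜ[k] b) • φ) w = a • φ (w * b) := rfl

instance : IsScalarTower A (A ⊗[k] B) (Coind k B J) where
  smul_assoc a s φ := by
    induction s with
    | zero => simp
    | tmul a' b => ext; simp [TensorProduct.smul_tmul', mul_smul]
    | add s t hs ht => simp [smul_add, add_smul, hs, ht]

def lift {Y : Type*} [AddCommGroup Y] [Module (A ⊗[k] B) Y] [Module A Y]
    [IsScalarTower A (A ⊗[k] B) Y] (h : Y →ₗ[A] J) : Y →ₗ[A ⊗[k] B] Coind k B J :=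
  AddMonoidHom.toLinearMapOfTmul
    { toFun y :=
        ofLinearMap
        { toFun w := h (((1 : A) ⊗ₜ[k] w) • y)
          map_add' w w' := by simp [TensorProduct.tmul_add, add_smul]
          map_smul' c w := by
            rw [TensorProduct.tmul_smul, ← algebraMap_smul A c, smul_assoc, map_smul,
              algebraMap_smul, RingHom.id_apply] }
      map_zero' := by ext; simp
      map_add' y y' := by ext; simp }
    fun a b y ↦ by
      ext w
      simp only [AddMonoidHom.coe_mk, ZeroHom.coe_mk, ofLinearMap_apply, LinearMap.coe_mk,
        AddHom.coe_mk, tmul_smul_apply]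
      rw [← map_smul, ← smul_assoc a, ← Algebra.TensorProduct.tmul_one_mul_eq_smul, ← mul_smul]
      simp

theorem lift_apply {Y : Type*} [AddCommGroup Y] [Module (A ⊗[k] B) Y] [Module A Y]
    [IsScalarTower A (A ⊗[k] B) Y] (h : Y →ₗ[A] J) (y : Y) (w : B) :
    lift (k := k) h y w = h (((1 : A) ⊗ₜ[k] w) • y) := rfl

variable (k B) in
def counit : Coind k B J →ₗ[A] J where
  toFun φ := φ 1
  map_add' _ _ := rfl
  map_smul' _ _ := rfl

instance [Module.Injective A J] : Module.Injective (A ⊗[k] B) (Coind k B J) where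
  out X Y _ _ _ _ f hf g := by
    let _ := restrictLeft k A B X
    let _ := restrictLeft k A B Y
    have := isScalarTower_restrictLeft k A B X
    have := isScalarTower_restrictLeft k A B Y
    obtain ⟨h, hh⟩ :=
      Module.Injective.out (f.restrictScalars A) hf (counit k B ∘ₗ g.restrictScalars A)
    refine ⟨lift h, fun x ↦ ext fun w ↦ ?_⟩
    calc lift h (f x) w = h (f (((1 : A) ⊗ₜ[k] w) • x)) := by rw [lift_apply, map_smul f]
      _ = g (((1 : A) ⊗ₜ[k] w) • x) 1 := hh _
      _ = g x w := by rw [map_smul, tmul_smul_apply, one_mul, one_smul]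

variable (k B) in
def mulRight : B →ₗ[B] Coind k B B where
  toFun y := ofLinearMap (LinearMap.mulRight k y)
  map_add' y y' := by ext; simp [mul_add]
  map_smul' b y := by ext; simp [mul_assoc]

@[simp]
theorem mulRight_apply (y w : B) : mulRight k B y w = w * y := rfl

variable (k B) in
theorem exists_retraction_mulRight [Module.Injective B B] :
    ∃ r : Coind k B B →ₗ[B] B, ∀ y, r (mulRight k B y) = y :=
  Module.Injective.out (mulRight k B) (fun y y' h ↦ by simpa using congr($h 1)) LinearMap.id

end Coind

noncomputable abbrev tensorModule (k A B I W : Type*) [CommRing k] [Ring A] [Ring B] [Algebra k A]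
    [Algebra k B] [AddCommGroup I] [Module k I] [Module A I] [IsScalarTower k A I]
    [AddCommGroup W] [Module k W] [Module B W] [IsScalarTower k B W] :
    Module (A ⊗[k] B) (I ⊗[k] W) :=
  Module.compHom _ (Module.endTensorEndAlgHom.comp
    (Algebra.TensorProduct.map (Algebra.lsmul k k I) (Algebra.lsmul k k W))).toRingHom

section TensorModule

attribute [local instance] tensorModule

variable {k A B I W W' : Type*} [CommRing k] [Ring A] [Ring B] [Algebra k A] [Algebra k B]
  [AddCommGroup I] [Module k I] [Module A I] [IsScalarTower k A I]
  [AddCommGroup W] [Module k W] [Module B W] [IsScalarTower k B W]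
  [AddCommGroup W'] [Module k W'] [Module B W'] [IsScalarTower k B W']

@[simp]
theorem tensorModule_tmul_smul_tmul (a : A) (b : B) (x : I) (w : W) :
    (a ⊗ₜ[k] b) • (x ⊗ₜ[k] w) = (a • x) ⊗ₜ[k] (b • w) := rfl

theorem tensorModule_tmul_one_smul (a : A) (z : I ⊗[k] W) :
    (a ⊗ₜ[k] (1 : B)) • z = a • z := by
  induction z with
  | zero => simp
  | tmul x w => simp [TensorProduct.smul_tmul']
  | add z z' hz hz' => simp [smul_add, hz, hz']

theorem tensorModule_map_smul {N : Type*} [AddCommGroup N] [Module (A ⊗[k] B) N]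
    (F : I ⊗[k] W →+ N)
    (hF : ∀ (a : A) (b : B) (x : I) (w : W), F ((a • x) ⊗ₜ[k] (b • w)) = (a ⊗ₜ[k] b) • F (x ⊗ₜ w))
    (a : A) (b : B) (z : I ⊗[k] W) : F ((a ⊗ₜ[k] b) • z) = (a ⊗ₜ[k] b) • F z := by
  induction z with
  | zero => simp
  | tmul x w => exact hF a b x w
  | add z z' hz hz' => simp [smul_add, hz, hz']

variable (I) in
noncomputable def tensorModuleLTensor (g : W →ₗ[B] W') : I ⊗[k] W →ₗ[A ⊗[k] B] I ⊗[k] W' :=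
  ((g.restrictScalars k).lTensor I).toAddMonoidHom.toLinearMapOfTmul <|
    tensorModule_map_smul _ fun a b x w ↦ by simp

@[simp]
theorem tensorModuleLTensor_apply (g : W →ₗ[B] W') (z : I ⊗[k] W) :
    tensorModuleLTensor I (A := A) g z = (g.restrictScalars k).lTensor I z := rfl

end TensorModule

theorem tensorModule_eq {k A B I W : Type u} [CommRing k] [Ring A] [Ring B] [Algebra k A]
    [Algebra k B] [AddCommGroup I] [Module k I] [Module A I] [IsScalarTower k A I]
    [AddCommGroup W] [Module k W] [Module B W] [IsScalarTower k B W]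
    (inst : Module (A ⊗[k] B) (I ⊗[k] W))
    (h : ∀ (a : A) (b : B) (x : I) (w : W),
      moduleSMul inst (a ⊗ₜ[k] b) (x ⊗ₜ[k] w) = (a • x) ⊗ₜ[k] (b • w)) :
    inst = tensorModule k A B I W := by
  suffices @smulAddHom _ _ _ _ inst = @smulAddHom _ _ _ _ (tensorModule k A B I W) from
    Module.ext' _ _ fun s z ↦ DFunLike.congr_fun (DFunLike.congr_fun this s) z
  refine AddMonoidHom.ext fun s ↦ ?_
  induction s with
  | zero => simp only [map_zero]
  | tmul a b =>
    refine AddMonoidHom.ext fun z ↦ ?_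
    induction z with
    | zero => simp only [map_zero]
    | tmul x w => exact h a b x w
    | add z z' hz hz' => simp only [map_add, hz, hz']
  | add s t hs ht => simp only [map_add, hs, ht]

section TensorCoind

attribute [local instance] tensorModule

variable (k : Type*) (A B I : Type u) [CommRing k] [Ring A] [Ring B] [Algebra k A] [Algebra k B]
  [AddCommGroup I] [Module k I] [Module A I] [IsScalarTower k A I]

noncomputable def tensorCoindEquiv [Module.Projective k B] [Module.Finite k B] :
    I ⊗[k] Coind k B B ≃ₗ[A ⊗[k] B] Coind k B (I ⊗[k] B) :=
  let e : I ⊗[k] Coind k B B ≃ₗ[k] Coind k B (I ⊗[k] B) :=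
    (Coind.ofLinearMap.symm.lTensor I).trans
      ((lTensorHomEquivHomLTensor k B I B).trans Coind.ofLinearMap)
  LinearEquiv.ofBijective
    (e.toAddMonoidHom.toLinearMapOfTmul <| tensorModule_map_smul _ fun a b x φ ↦ by
      ext w
      simp [e, lTensorHomEquivHomLTensor_apply, TensorProduct.smul_tmul'])
    e.bijective

end TensorCoind

section InjectiveHull

attribute [local instance] tensorModule

theorem tensorModule_injective {k : Type*} {A B I : Type u} [Field k] [Ring A] [Ring B]
    [Algebra k A] [Algebra k B] [FiniteDimensional k B] [Module.Injective B B]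
    [AddCommGroup I] [Module k I] [Module A I] [IsScalarTower k A I] [Module.Injective A I] :
    Module.Injective (A ⊗[k] B) (I ⊗[k] B) := by
  obtain ⟨r, hr⟩ := Coind.exists_retraction_mulRight k B
  have : Module.Injective A (I ⊗[k] B) := .tensorProduct_of_finiteDimensional
  have : Module.Injective (A ⊗[k] B) (I ⊗[k] Coind k B B) :=
    let e := tensorCoindEquiv k A B I
    .of_retraction e.toLinearMap e.symm.toLinearMap e.symm_apply_apply
  refine .of_retraction (tensorModuleLTensor I (Coind.mulRight k B))
    (tensorModuleLTensor I r) fun z ↦ ?_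
  have hrk : r.restrictScalars k ∘ₗ (Coind.mulRight k B).restrictScalars k = .id :=
    LinearMap.ext hr
  simp [← LinearMap.lTensor_comp_apply, hrk]

theorem tensorModule_exists_ne_zero_mem_range_rTensor {k A B I M : Type*} [Field k] [Ring A]
    [Ring B] [Algebra k A] [Algebra k B] [FiniteDimensional k B]
    [AddCommGroup I] [Module k I] [Module A I] [IsScalarTower k A I]
    [AddCommGroup M] [Module k M] [Module A M] [IsScalarTower k A M] (f : M →ₗ[A] I)
    (hf : ∀ N : Submodule A I, N ≠ ⊥ → N ⊓ LinearMap.range f ≠ ⊥)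
    (N : Submodule (A ⊗[k] B) (I ⊗[k] B)) {z : I ⊗[k] B} (hzN : z ∈ N) (hz : z ≠ 0) :
    ∃ y ∈ N, y ≠ 0 ∧ y ∈ Set.range ((f.restrictScalars k).rTensor B) := by
  let e := TensorProduct.equivPiOfBasisRight A I (Module.finBasis k B)
  let eM := TensorProduct.equivPiOfBasisRight A M (Module.finBasis k B)
  obtain ⟨a, ha, haf⟩ :=
    exists_smul_ne_zero_forall_mem_of_essential hf ((e.map_ne_zero_iff).mpr hz)
  choose m hm using haf
  refine ⟨(a ⊗ₜ[k] (1 : B)) • z, N.smul_mem _ hzN, ?_, eM.symm m, e.injective <| funext fun i ↦ ?_⟩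
  · rw [tensorModule_tmul_one_smul]
    exact fun h ↦ ha (by rw [← map_smul, h, map_zero])
  · rw [TensorProduct.equivPiOfBasisRight_rTensor, eM.apply_symm_apply, hm,
      tensorModule_tmul_one_smul, map_smul, Pi.smul_apply]

end InjectiveHull

theorem stmt17_general (k : Type u) [Field k]
    (A B : Type u) [Ring A] [Ring B] [Algebra k A] [Algebra k B]
    [FiniteDimensional k B]
    (hB : Module.Injective B B)
    (I : Type u) [AddCommGroup I] [Module k I] [Module A I] [IsScalarTower k A I]
    (hI : Module.Injective A I)
    (inst : Module (A ⊗[k] B) (I ⊗[k] B))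
    (hsmul : ∀ (a : A) (b : B) (x : I) (y : B),
      moduleSMul inst (a ⊗ₜ[k] b) (x ⊗ₜ[k] y) = (a • x) ⊗ₜ[k] (b * y)) :
    @Module.Injective (A ⊗[k] B) _ (I ⊗[k] B) _ inst ∧
    ∀ (M : Type u) [AddCommGroup M] [Module k M] [Module A M] [IsScalarTower k A M]
      (f : M →ₗ[A] I), IsInjHull A f →
        Function.Injective (LinearMap.rTensor B (f.restrictScalars k)) ∧
        ∀ N : @Submodule (A ⊗[k] B) (I ⊗[k] B) _ _ inst,
          (∃ z ∈ N, z ≠ (0 : I ⊗[k] B)) →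
          ∃ y ∈ N, y ≠ (0 : I ⊗[k] B) ∧
            y ∈ Set.range (LinearMap.rTensor B (f.restrictScalars k)) := by
  obtain rfl := tensorModule_eq inst hsmul
  refine ⟨tensorModule_injective, fun M _ _ _ _ f ⟨_, hf, hess⟩ ↦ ⟨?_, ?_⟩⟩
  · exact Module.Flat.rTensor_preserves_injective_linearMap _ hf
  · rintro N ⟨z, hzN, hz⟩
    exact tensorModule_exists_ne_zero_mem_range_rTensor f hess N hzN hz

/-- Let `A`, `B` be finite dimensional algebras over a field `k` with `B`
self-injective, and let `I` be an injective `A`-module. Then `I ⊗ₖ B`, with its natural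
componentwise `A ⊗ₖ B`-module structure, is an injective `A ⊗ₖ B`-module. Moreover, if
`f : M → I` is an injective hull, then the induced map `M ⊗ₖ B → I ⊗ₖ B` exhibits `I ⊗ₖ B`
as an injective hull of `M ⊗ₖ B`: it is an injective map, `I ⊗ₖ B` is injective, and its
image is essential (every `A ⊗ₖ B`-submodule containing a nonzero element meets the image
nontrivially). -/
theorem stmt17 (k : Type u) [Field k]
    (A B : Type u) [Ring A] [Ring B] [Algebra k A] [Algebra k B]
    [FiniteDimensional k A] [FiniteDimensional k B]
    (hB : Module.Injective B B)
    (I : Type u) [AddCommGroup I] [Module k I] [Module A I] [IsScalarTower k A I]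
    (hI : Module.Injective A I)
    (inst : Module (A ⊗[k] B) (I ⊗[k] B))
    (hsmul : ∀ (a : A) (b : B) (x : I) (y : B),
      moduleSMul inst (a ⊗ₜ[k] b) (x ⊗ₜ[k] y) = (a • x) ⊗ₜ[k] (b * y)) :
    @Module.Injective (A ⊗[k] B) _ (I ⊗[k] B) _ inst ∧
    ∀ (M : Type u) [AddCommGroup M] [Module k M] [Module A M] [IsScalarTower k A M]
      (f : M →ₗ[A] I), IsInjHull A f →
        Function.Injective (LinearMap.rTensor B (f.restrictScalars k)) ∧
        ∀ N : @Submodule (A ⊗[k] B) (I ⊗[k] B) _ _ inst,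
          (∃ z ∈ N, z ≠ (0 : I ⊗[k] B)) →
          ∃ y ∈ N, y ≠ (0 : I ⊗[k] B) ∧
            y ∈ Set.range (LinearMap.rTensor B (f.restrictScalars k)) :=
  stmt17_general k A B hB I hI inst hsmul
end
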